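/- Let n ≥ 2 and p be integers with 1 ≤ p ≤ n−1, and let k₁,…,kₙ be real numbers with Σᵢ kᵢ = 0. Then for every subset a ⊆ {1,…,n} with |a| = p, one has (Σ_{i∈a} kᵢ)² ≤ (p(n−p)/n)·Σ_{i=1}^n kᵢ². -/

import Mathlib

/-!
Write `S = ∑_{i ∈ a} kᵢ`. Since the total sum vanishes, the complement of `a` sums to `-S`, so
Cauchy–Schwarz on `a` and on its complement gives `S² ≤ p ∑_{a} kᵢ²` and `S² ≤ (n - p) ∑_{aᶜ} kᵢ²`.
Weighting these by `n - p` and `p` and adding yields `n S² ≤ p (n - p) ∑ kᵢ²`.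
-/

open Finset

section

variable {ι : Type*} [Fintype ι] (k : ι → ℝ) (s : Finset ι)

theorem card_mul_sq_sum_le_of_sum_eq_zero (hk : ∑ i, k i = 0) :
    (Fintype.card ι : ℝ) * (∑ i ∈ s, k i) ^ 2
      ≤ #s * (Fintype.card ι - #s) * ∑ i, k i ^ 2 := by
  classical
  set S := ∑ i ∈ s, k i
  have hcompl_sum : ∑ i ∈ sᶜ, k i = -S := by
    linarith [sum_add_sum_compl s k]
  have hcompl_card : ((#sᶜ : ℕ) : ℝ) = Fintype.card ι - #s := by
    rw [card_compl, Nat.cast_sub (card_le_univ s)]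
  have hs : S ^ 2 ≤ #s * ∑ i ∈ s, k i ^ 2 := sq_sum_le_card_mul_sum_sq
  have hsc : S ^ 2 ≤ (Fintype.card ι - #s) * ∑ i ∈ sᶜ, k i ^ 2 := by
    have := sq_sum_le_card_mul_sum_sq (s := sᶜ) (f := k)
    rwa [hcompl_sum, neg_sq, hcompl_card] at this
  have hcompl_nonneg : (0 : ℝ) ≤ Fintype.card ι - #s := by
    rw [← hcompl_card]; positivity
  calc (Fintype.card ι : ℝ) * S ^ 2 = (Fintype.card ι - #s) * S ^ 2 + #s * S ^ 2 := by ring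
    _ ≤ (Fintype.card ι - #s) * (#s * ∑ i ∈ s, k i ^ 2)
          + #s * ((Fintype.card ι - #s) * ∑ i ∈ sᶜ, k i ^ 2) := by
        gcongr
    _ = #s * (Fintype.card ι - #s) * ∑ i, k i ^ 2 := by
        rw [← sum_add_sum_compl s (fun i ↦ k i ^ 2)]; ring

theorem sq_sum_le_of_sum_eq_zero (hk : ∑ i, k i = 0) :
    (∑ i ∈ s, k i) ^ 2 ≤ (#s * (Fintype.card ι - #s) / Fintype.card ι) * ∑ i, k i ^ 2 := by
  rcases isEmpty_or_nonempty ι with hι | hι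
  · simp [Subsingleton.elim s ∅]
  rw [div_mul_eq_mul_div, le_div_iff₀ (by positivity), mul_comm]
  exact card_mul_sq_sum_le_of_sum_eq_zero k s hk

end

theorem tracefree_partial_sum_sq_bound_general (n p : ℕ)
    (k : Fin n → ℝ) (htr : ∑ i, k i = 0)
    (a : Finset (Fin n)) (ha : a.card = p) :
    (∑ i ∈ a, k i) ^ 2 ≤ ((p : ℝ) * ((n : ℝ) - (p : ℝ)) / (n : ℝ)) * ∑ i, (k i) ^ 2 := by
  simpa [ha] using sq_sum_le_of_sum_eq_zero k a htr

theorem tracefree_partial_sum_sq_bound (n p : ℕ) (hn : 2 ≤ n) (hp : 1 ≤ p) (hpn : p ≤ n - 1)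
    (k : Fin n → ℝ) (htr : ∑ i, k i = 0)
    (a : Finset (Fin n)) (ha : a.card = p) :
    (∑ i ∈ a, k i) ^ 2 ≤ ((p : ℝ) * ((n : ℝ) - (p : ℝ)) / (n : ℝ)) * ∑ i, (k i) ^ 2 :=
  tracefree_partial_sum_sq_bound_general n p k htr a ha
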